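/- arXiv:2502.05474 — 3 statements merged into one kernel-verified Lean document; each statement's English description precedes it below -/
import Mathlib

section
/- Let Y be a nonnegative random variable with E[Y²] < ∞ under probability P and E^Q[Y] < ∞ under another probability Q, let θ ≥ 0 and κ > 0. Define H(I) = (1+θ)E^Q[I(Y)] + E[Y − I(Y)] + (κ/2)E[(Y − I(Y))²] for I ∈ C. Then the infimum of H over C is attained by some I* ∈ C. -/
/-!
Restricted to `[0, ∞)`, the indemnities in `C` are `1`-Lipschitz and satisfy `0 ≤ I x ≤ x`. By
Tychonoff, every sequence in `C` has a subsequence converging at all rationals; equicontinuity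
upgrades this to convergence at every `x ≥ 0`, and the limit stays in `C`. Along such a subsequence
`H` converges by dominated convergence, with dominating functions `Y` (under `Q` and `P`) and `Y²`.
Hence the image of `C` under `H` is a sequentially compact, so compact, subset of `ℝ`, and its
least element is attained.
-/

open MeasureTheory

/-- The class `C` of incentive-compatible indemnity functions. -/
def IndemnityC (f : ℝ → ℝ) : Prop :=
  f 0 = 0 ∧ ∀ x y : ℝ, 0 ≤ x → x ≤ y → 0 ≤ f y - f x ∧ f y - f x ≤ y - x

open Filter Topology Set

theorem exists_isMinOn_of_tendsto_subseq {α : Type*} {S : Set α} (hS : S.Nonempty) (F : α → ℝ)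
    (h : ∀ u : ℕ → α, (∀ n, u n ∈ S) →
      ∃ a ∈ S, ∃ φ : ℕ → ℕ, StrictMono φ ∧ Tendsto (F ∘ u ∘ φ) atTop (𝓝 (F a))) :
    ∃ a ∈ S, IsMinOn F S a := by
  have hcompact : IsSeqCompact (F '' S) := by
    intro t ht
    choose u hu hFu using ht
    obtain ⟨a, ha, φ, hφ, hlim⟩ := h u hu
    refine ⟨F a, mem_image_of_mem F ha, φ, hφ, ?_⟩
    rw [← funext hFu]
    exact hlim
  obtain ⟨_, ⟨a, ha, rfl⟩, hmin⟩ := hcompact.isCompact.exists_isLeast (hS.image F)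
  exact ⟨a, ha, fun b hb => hmin (mem_image_of_mem F hb)⟩

theorem EquicontinuousAt.cauchySeq_of_mem_closure {X α : Type*} [TopologicalSpace X]
    [PseudoMetricSpace α] {F : ℕ → X → α} {s : Set X} {x : X} (hF : EquicontinuousAt F x)
    (hs : ∀ y ∈ s, CauchySeq (F · y)) (hx : x ∈ closure s) : CauchySeq (F · x) := by
  rw [Metric.cauchySeq_iff']
  intro ε hε
  obtain ⟨y, hFxy, hy⟩ :=
    ((Metric.equicontinuousAt_iff_right.1 hF (ε / 3) (by positivity)).and_frequently
      (mem_closure_iff_frequently.1 hx)).exists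
  obtain ⟨N, hN⟩ := Metric.cauchySeq_iff'.1 (hs y hy) (ε / 3) (by positivity)
  refine ⟨N, fun n hn => ?_⟩
  calc dist (F n x) (F N x)
      ≤ dist (F n x) (F n y) + dist (F n y) (F N y) + dist (F N y) (F N x) :=
        dist_triangle4 _ _ _ _
    _ < ε / 3 + ε / 3 + ε / 3 := by
        gcongr
        · exact hFxy n
        · exact hN n hn
        · rw [dist_comm]
          exact hFxy N
    _ = ε := by ring

theorem indemnityC_zero : IndemnityC 0 :=
  ⟨rfl, fun x y _ hxy => by simpa using hxy⟩

namespace IndemnityC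

variable {I : ℝ → ℝ}

theorem mem_Icc (hI : IndemnityC I) {x : ℝ} (hx : 0 ≤ x) : I x ∈ Icc 0 x := by
  have h := hI.2 0 x le_rfl hx
  rw [hI.1, sub_zero, sub_zero] at h
  exact h

theorem lipschitzWith_comp_max (hI : IndemnityC I) : LipschitzWith 1 fun x => I (max x 0) := by
  refine LipschitzWith.of_le_add fun x y => ?_
  rcases le_total (max x 0) (max y 0) with h | h
  · linarith [(hI.2 _ _ (le_max_right x 0) h).1, dist_nonneg (x := x) (y := y)]
  · linarith [(hI.2 _ _ (le_max_right y 0) h).2, abs_max_sub_max_le_abs x y 0,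
      le_abs_self (max x 0 - max y 0), Real.dist_eq x y]

theorem measurable_comp (hI : IndemnityC I) {Ω : Type*} [MeasurableSpace Ω] {Y : Ω → ℝ}
    (hY : Measurable Y) (hYnn : ∀ ω, 0 ≤ Y ω) : Measurable fun ω => I (Y ω) := by
  have hcomp : (fun ω => I (Y ω)) = (fun x => I (max x 0)) ∘ Y :=
    funext fun ω => by simp only [Function.comp_apply, max_eq_left (hYnn ω)]
  exact hcomp ▸ hI.lipschitzWith_comp_max.continuous.measurable.comp hY

theorem of_tendsto {ι : Type*} {l : Filter ι} [l.NeBot] {f : ι → ℝ → ℝ}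
    (hf : ∀ i, IndemnityC (f i)) (hlim : ∀ x, 0 ≤ x → Tendsto (f · x) l (𝓝 (I x))) :
    IndemnityC I := by
  refine ⟨tendsto_nhds_unique (hlim 0 le_rfl) ?_, fun x y hx hxy => ?_⟩
  · simp only [(hf _).1, tendsto_const_nhds]
  have hsub := (hlim y (hx.trans hxy)).sub (hlim x hx)
  exact ⟨ge_of_tendsto hsub (Eventually.of_forall fun i => ((hf i).2 x y hx hxy).1),
    le_of_tendsto hsub (Eventually.of_forall fun i => ((hf i).2 x y hx hxy).2)⟩

theorem exists_subseq_tendsto {f : ℕ → ℝ → ℝ} (hf : ∀ n, IndemnityC (f n)) :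
    ∃ J, IndemnityC J ∧ ∃ φ : ℕ → ℕ, StrictMono φ ∧
      ∀ x, 0 ≤ x → Tendsto (fun k => f (φ k) x) atTop (𝓝 (J x)) := by
  -- Precomposing with `max · 0` makes the whole family `1`-Lipschitz on `ℝ`.
  set g : ℕ → ℝ → ℝ := fun n x => f n (max x 0)
  obtain ⟨ρ, -, φ, hφ, hρ⟩ :=
    (isCompact_univ_pi fun q : ℚ => isCompact_Icc (a := 0) (b := max (q : ℝ) 0)).tendsto_subseq
      (x := fun n (q : ℚ) => g n q)
      fun n => mem_univ_pi.2 fun q => (hf n).mem_Icc (le_max_right _ _)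
  have hequicont : Equicontinuous fun k => g (φ k) :=
    (LipschitzWith.uniformEquicontinuous _ 1 fun k =>
      (hf (φ k)).lipschitzWith_comp_max).equicontinuous
  have hcauchy : ∀ x, CauchySeq fun k => g (φ k) x := fun x =>
    (hequicont x).cauchySeq_of_mem_closure (s := range ((↑) : ℚ → ℝ))
      (forall_mem_range.2 fun q => (tendsto_pi_nhds.1 hρ q).cauchySeq) (Rat.denseRange_cast x)
  choose J hJ using fun x => cauchySeq_tendsto_of_complete (hcauchy x)
  have hlim : ∀ x, 0 ≤ x → Tendsto (fun k => f (φ k) x) atTop (𝓝 (J x)) := fun x hx => by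
    simpa only [g, max_eq_left hx] using hJ x
  exact ⟨J, of_tendsto (fun k => hf (φ k)) hlim, φ, hφ, hlim⟩

theorem tendsto_integral_comp {Ω : Type*} [MeasurableSpace Ω] {μ : Measure Ω} {Y : Ω → ℝ}
    (hY : Measurable Y) (hYnn : ∀ ω, 0 ≤ Y ω) {f : ℕ → ℝ → ℝ} (hf : ∀ n, IndemnityC (f n))
    (hlim : ∀ x, 0 ≤ x → Tendsto (f · x) atTop (𝓝 (I x))) {g : ℝ → ℝ → ℝ}
    (hg : Continuous (Function.uncurry g)) {b : Ω → ℝ} (hb : Integrable b μ)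
    (hgb : ∀ ω, ∀ t ∈ Icc 0 (Y ω), |g (Y ω) t| ≤ b ω) :
    Tendsto (fun n => ∫ ω, g (Y ω) (f n (Y ω)) ∂μ) atTop (𝓝 (∫ ω, g (Y ω) (I (Y ω)) ∂μ)) :=
  tendsto_integral_of_dominated_convergence b
    (fun n =>
      (hg.measurable.comp (hY.prodMk ((hf n).measurable_comp hY hYnn))).aestronglyMeasurable)
    hb (fun n => ae_of_all _ fun ω => hgb ω _ ((hf n).mem_Icc (hYnn ω)))
    (ae_of_all _ fun ω => (hg.tendsto _).comp (tendsto_const_nhds.prodMk_nhds (hlim _ (hYnn ω))))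

end IndemnityC

theorem exists_minimizer_H_general
    {Ω : Type*} [MeasurableSpace Ω] (P Q : Measure Ω)
    [IsProbabilityMeasure P]
    (Y : Ω → ℝ) (hY : Measurable Y) (hYnn : ∀ ω, 0 ≤ Y ω)
    (hY2 : Integrable (fun ω => (Y ω) ^ 2) P) (hYQ : Integrable Y Q)
    (θ κ : ℝ)
    (H : (ℝ → ℝ) → ℝ)
    (hH : ∀ I : ℝ → ℝ, H I =
      (1 + θ) * ∫ ω, I (Y ω) ∂Q + ∫ ω, (Y ω - I (Y ω)) ∂P +
        κ / 2 * ∫ ω, (Y ω - I (Y ω)) ^ 2 ∂P) :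
    ∃ Istar : ℝ → ℝ, IndemnityC Istar ∧ ∀ I : ℝ → ℝ, IndemnityC I → H Istar ≤ H I := by
  have hYP : Integrable Y P :=
    ((memLp_two_iff_integrable_sq hY.aestronglyMeasurable).2 hY2).integrable one_le_two
  have hH_tendsto : ∀ (f : ℕ → ℝ → ℝ) (J : ℝ → ℝ), (∀ n, IndemnityC (f n)) →
      (∀ x, 0 ≤ x → Tendsto (f · x) atTop (𝓝 (J x))) → Tendsto (H ∘ f) atTop (𝓝 (H J)) := by
    intro f J hf hlim
    simp only [Function.comp_def, hH]
    refine ((Tendsto.const_mul (1 + θ) ?_).add ?_).add (Tendsto.const_mul (κ / 2) ?_)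
    · exact IndemnityC.tendsto_integral_comp (g := fun _ t => t) hY hYnn hf hlim
        (by fun_prop) hYQ fun ω t ht => abs_le.2 ⟨by linarith [ht.1, hYnn ω], ht.2⟩
    · exact IndemnityC.tendsto_integral_comp (g := fun y t => y - t) hY hYnn hf hlim
        (by fun_prop) hYP fun ω t ht => abs_le.2 ⟨by linarith [ht.1, ht.2], by linarith [ht.1]⟩
    · exact IndemnityC.tendsto_integral_comp (g := fun y t => (y - t) ^ 2) hY hYnn hf hlim
        (by fun_prop) hY2 fun ω t ht => by
          rw [abs_of_nonneg (sq_nonneg _)]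
          nlinarith [ht.1, ht.2]
  obtain ⟨Istar, hIstar, hmin⟩ :=
    exists_isMinOn_of_tendsto_subseq (S := {I | IndemnityC I}) ⟨0, indemnityC_zero⟩ H
      fun f hf => by
        obtain ⟨J, hJ, φ, hφ, hlim⟩ := IndemnityC.exists_subseq_tendsto hf
        exact ⟨J, hJ, φ, hφ, hH_tendsto (f ∘ φ) J (fun k => hf (φ k)) hlim⟩
  exact ⟨Istar, hIstar, fun I hI => hmin hI⟩

/-- Existence of a minimizer of
`H(I) = (1+θ)E^Q[I(Y)] + E[Y − I(Y)] + (κ/2)E[(Y − I(Y))²]` over `C`. -/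
theorem exists_minimizer_H
    {Ω : Type*} [MeasurableSpace Ω] (P Q : Measure Ω)
    [IsProbabilityMeasure P] [IsProbabilityMeasure Q]
    (Y : Ω → ℝ) (hY : Measurable Y) (hYnn : ∀ ω, 0 ≤ Y ω)
    (hY2 : Integrable (fun ω => (Y ω) ^ 2) P) (hYQ : Integrable Y Q)
    (θ κ : ℝ) (hθ : 0 ≤ θ) (hκ : 0 < κ)
    (H : (ℝ → ℝ) → ℝ)
    (hH : ∀ I : ℝ → ℝ, H I =
      (1 + θ) * ∫ ω, I (Y ω) ∂Q + ∫ ω, (Y ω - I (Y ω)) ∂P +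
        κ / 2 * ∫ ω, (Y ω - I (Y ω)) ^ 2 ∂P) :
    ∃ Istar : ℝ → ℝ, IndemnityC Istar ∧ ∀ I : ℝ → ℝ, IndemnityC I → H Istar ≤ H I :=
  exists_minimizer_H_general P Q Y hY hYnn hY2 hYQ θ κ H hH
end

section
/- Let Y ≥ 0 have continuous strictly increasing distribution F with density f and E[Y²] < ∞, let 0 < α < 1, v = VaR_α(Y) (so F(v) = 1−α), θ ≥ 0, κ > 0. Define H₂(a) = (1+θ)a + ∫_a^v (y−a)dF(y) + (v−a)(1−F(v)) + (κ/2)(∫₀^v (y−a)₊² dF(y) + (v−a)²(1−F(v))) for a ∈ [0,v], interpreting the integrals for the strategy I(y) = y∧a + (y−v)₊. Then ∂H₂/∂a(a) = θ + F(a) + κ(a(1−F(a)) − αv − ∫_a^v y dF(y)), this derivative is strictly increasing in a, is positive at a = v, and H₂ is minimized at a* = 0 if θ ≥ κ(E[Y] + αVaR_α(Y) − αES_α(Y)), and otherwise at the unique a* ∈ (0,v) where the derivative vanishes. -/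
open MeasureTheory intervalIntegral Set

/-- The function `u ↦ (max u 0)^2` is differentiable with derivative `2 * max u 0`. -/
lemma hasDerivAt_max_sq (u : ℝ) :
    HasDerivAt (fun x : ℝ => max x 0 ^ 2) (2 * max u 0) u := by
  rcases lt_trichotomy u 0 with hu | hu | hu
  · have h0 : max u 0 = 0 := max_eq_right hu.le
    rw [h0, mul_zero]
    have heq : (fun x : ℝ => max x 0 ^ 2) =ᶠ[nhds u] fun _ => (0 : ℝ) := by
      filter_upwards [Iio_mem_nhds hu] with x hx
      simp [max_eq_right (le_of_lt (mem_Iio.mp hx))]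
    exact (hasDerivAt_const u (0 : ℝ)).congr_of_eventuallyEq heq
  · subst hu
    rw [max_self, mul_zero, hasDerivAt_iff_tendsto_slope]
    have key : ∀ x : ℝ, ‖slope (fun x : ℝ => max x 0 ^ 2) 0 x‖ ≤ |x| := by
      intro x
      rcases eq_or_ne x 0 with rfl | hx
      · simp [slope]
      · have h1 : max x 0 ^ 2 ≤ x ^ 2 := by
          rcases le_or_gt x 0 with h | h
          · rw [max_eq_right h]; simpa using sq_nonneg x
          · rw [max_eq_left h.le]
        have h2 : (0 : ℝ) ≤ max x 0 ^ 2 := by positivity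
        have hxabs : 0 < |x| := abs_pos.mpr hx
        rw [slope_def_field]
        simp only [max_self, ne_eq, OfNat.ofNat_ne_zero, not_false_eq_true, zero_pow,
          sub_zero]
        rw [norm_div, Real.norm_eq_abs, Real.norm_eq_abs, abs_of_nonneg h2,
          div_le_iff₀ hxabs]
        calc max x 0 ^ 2 ≤ x ^ 2 := h1
          _ = |x| * |x| := by rw [← sq_abs x, sq]
    have habs : Filter.Tendsto (fun x : ℝ => |x|) (nhdsWithin 0 {(0:ℝ)}ᶜ) (nhds 0) := by
      have := (continuous_abs.tendsto (0 : ℝ))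
      simpa using this.mono_left nhdsWithin_le_nhds
    exact squeeze_zero_norm key habs
  · have h0 : max u 0 = u := max_eq_left hu.le
    rw [h0]
    have heq : (fun x : ℝ => max x 0 ^ 2) =ᶠ[nhds u] fun x => x ^ 2 := by
      filter_upwards [Ioi_mem_nhds hu] with x hx
      simp [max_eq_left (le_of_lt (mem_Ioi.mp hx))]
    have h2 : HasDerivAt (fun x : ℝ => x ^ 2) (2 * u) u := by
      simpa using (hasDerivAt_pow 2 u)
    exact h2.congr_of_eventuallyEq heq

/-- Optimal dual truncated excess-of-loss parameter when the premium is `VaR`: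
for the strategy `I(y) = y∧a + (y−v)₊` with `v = VaR_α(Y)`, the objective
`H₂(a)` has derivative `θ + F(a) + κ(a(1−F(a)) − αv − ∫_a^v y dF(y))`, which is
strictly increasing and positive at `a = v`; the minimizer is `a* = 0` if
`θ ≥ κ(E[Y] + αVaR_α(Y) − αES_α(Y))`, and otherwise the unique interior root
of the derivative. -/
theorem VaR_premium_optimal_retention
    (f F : ℝ → ℝ) (hfcont : Continuous f) (hfnn : ∀ x, 0 ≤ f x)
    (hF : ∀ x : ℝ, HasDerivAt F (f x) x)
    (hF0 : F 0 = 0) (hFmono : StrictMonoOn F (Ici (0 : ℝ)))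
    (hFlim : Filter.Tendsto F Filter.atTop (nhds 1))
    (hmom2 : IntegrableOn (fun y => y ^ 2 * f y) (Ioi (0 : ℝ)) volume)
    (α θ κ : ℝ) (hα : α ∈ Ioo (0 : ℝ) 1) (hθ : 0 ≤ θ) (hκ : 0 < κ)
    (v : ℝ) (hv0 : 0 < v) (hv : F v = 1 - α)
    (VaR : ℝ → ℝ) (hVaR : ∀ s ∈ Ioo (0 : ℝ) 1, F (VaR s) = 1 - s)
    (ES EY : ℝ)
    (hES : ES = (1 / α) * ∫ s in (0 : ℝ)..α, VaR s)
    (hEY : EY = ∫ y in Ioi (0 : ℝ), y * f y)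
    (H₂ D : ℝ → ℝ)
    (hH₂ : ∀ a : ℝ, H₂ a =
      (1 + θ) * a + (∫ y in a..v, (y - a) * f y) + (v - a) * (1 - F v) +
        κ / 2 * ((∫ y in (0 : ℝ)..v, (max (y - a) 0) ^ 2 * f y) +
          (v - a) ^ 2 * (1 - F v)))
    (hD : ∀ a : ℝ, D a =
      θ + F a + κ * (a * (1 - F a) - α * v - ∫ y in a..v, y * f y)) :
    (∀ a ∈ Icc (0 : ℝ) v, HasDerivAt H₂ (D a) a) ∧
      StrictMonoOn D (Icc (0 : ℝ) v) ∧
      0 < D v ∧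
      (θ ≥ κ * (EY + α * v - α * ES) → ∀ a ∈ Icc (0 : ℝ) v, H₂ 0 ≤ H₂ a) ∧
      (θ < κ * (EY + α * v - α * ES) →
        ∃ astar : ℝ, astar ∈ Ioo (0 : ℝ) v ∧ D astar = 0 ∧
          (∀ a ∈ Icc (0 : ℝ) v, H₂ astar ≤ H₂ a) ∧
          ∀ a ∈ Ioo (0 : ℝ) v, D a = 0 → a = astar) := by
  obtain ⟨hα0, hα1⟩ := hα
  -- basic facts about F
  have hFdiff : Differentiable ℝ F := fun x => (hF x).differentiableAt
  have hFmono' : Monotone F := by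
    apply monotone_of_deriv_nonneg hFdiff
    intro x; rw [(hF x).deriv]; exact hfnn x
  have hFlt1 : ∀ y, F y < 1 := by
    intro y
    have h1 : F (max y 0) < F (max y 0 + 1) :=
      hFmono (mem_Ici.mpr (le_max_right y 0))
        (mem_Ici.mpr (by positivity)) (lt_add_one _)
    have h2 : F (max y 0 + 1) ≤ 1 := hFmono'.ge_of_tendsto hFlim _
    exact lt_of_le_of_lt (hFmono' (le_max_left y 0)) (lt_of_lt_of_le h1 h2)
  have hFnn : ∀ y, 0 ≤ y → 0 ≤ F y := fun y hy => hF0 ▸ hFmono' hy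
  have hFpos : ∀ y, 0 < y → 0 < F y := fun y hy =>
    hF0 ▸ hFmono (mem_Ici.mpr le_rfl) (mem_Ici.mpr hy.le) hy
  have hVaRpos : ∀ s ∈ Ioo (0:ℝ) 1, 0 < VaR s := by
    intro s hs
    by_contra h
    push_neg at h
    have h2 : F (VaR s) ≤ F 0 := hFmono' h
    rw [hVaR s hs, hF0] at h2
    linarith [hs.2]
  have hFinj : InjOn F (Ici (0:ℝ)) := hFmono.injOn
  have hVaReq : ∀ y : ℝ, 0 < y → VaR (1 - F y) = y := by
    intro y hy
    have hFy0 : 0 < F y := hFpos y hy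
    have hFy1 : F y < 1 := hFlt1 y
    have hmem : (1 - F y) ∈ Ioo (0:ℝ) 1 := ⟨by linarith, by linarith⟩
    have h1 : F (VaR (1 - F y)) = F y := by rw [hVaR _ hmem]; ring
    exact hFinj (mem_Ici.mpr (hVaRpos _ hmem).le) (mem_Ici.mpr hy.le) h1
  -- FTC for f
  have hfInt : ∀ a b : ℝ, IntervalIntegrable f volume a b :=
    fun a b => hfcont.intervalIntegrable a b
  have hFTC : ∀ a b : ℝ, (∫ y in a..b, f y) = F b - F a := fun a b =>
    integral_eq_sub_of_hasDerivAt (fun x _ => hF x) (hfInt a b)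
  -- integrability of y * f y on (0, ∞)
  have hyfc : Continuous (fun y : ℝ => y * f y) := continuous_id.mul hfcont
  have hyf_int : IntegrableOn (fun y => y * f y) (Ioi (0:ℝ)) volume := by
    rw [← Ioc_union_Ioi_eq_Ioi (zero_le_one (α := ℝ))]
    apply IntegrableOn.union
    · exact hyfc.integrableOn_Ioc
    · apply Integrable.mono (hmom2.mono_set (Ioi_subset_Ioi zero_le_one))
        hyfc.aestronglyMeasurable.restrict
      apply (ae_restrict_iff' measurableSet_Ioi).2 (ae_of_all _ _)
      intro y hy
      have h1 : (1:ℝ) < y := hy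
      have h2 : (0:ℝ) ≤ y * f y := by
        have := hfnn y; nlinarith
      have h3 : (0:ℝ) ≤ y ^ 2 * f y := by
        have := hfnn y; nlinarith
      rw [Real.norm_eq_abs, Real.norm_eq_abs, abs_of_nonneg h2, abs_of_nonneg h3]
      nlinarith [hfnn y]
  have hyf_int_v : IntegrableOn (fun y => y * f y) (Ioi v) volume :=
    hyf_int.mono_set (Ioi_subset_Ioi hv0.le)
  -- continuity of VaR on (0,1)
  have hVaRcont : ContinuousOn VaR (Ioo (0:ℝ) 1) := by
    intro s₀ hs₀
    have hy₀ : 0 < VaR s₀ := hVaRpos s₀ hs₀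
    rw [Metric.continuousWithinAt_iff]
    intro ε hε
    set y₀ := VaR s₀ with hy₀def
    set ε' := min (ε/2) (y₀/2) with hε'def
    have hε'pos : 0 < ε' := lt_min (by linarith) (by linarith)
    have hε'le : ε' ≤ ε/2 := min_le_left _ _
    have hε'le2 : ε' ≤ y₀/2 := min_le_right _ _
    have hy₁ : (0:ℝ) ≤ y₀ - ε' := by linarith
    have hd1 : 0 < F y₀ - F (y₀ - ε') :=
      sub_pos.mpr (hFmono (mem_Ici.mpr hy₁) (mem_Ici.mpr hy₀.le) (by linarith))
    have hd2 : 0 < F (y₀ + ε') - F y₀ :=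
      sub_pos.mpr (hFmono (mem_Ici.mpr hy₀.le) (mem_Ici.mpr (by linarith)) (by linarith))
    refine ⟨min (F y₀ - F (y₀ - ε')) (F (y₀ + ε') - F y₀), lt_min hd1 hd2,
      fun s hs hdist => ?_⟩
    have hFs : F (VaR s) = 1 - s := hVaR s hs
    have hFs₀ : F y₀ = 1 - s₀ := hVaR s₀ hs₀
    rw [Real.dist_eq, abs_lt] at hdist
    have hm1 := min_le_left (F y₀ - F (y₀ - ε')) (F (y₀ + ε') - F y₀)
    have hm2 := min_le_right (F y₀ - F (y₀ - ε')) (F (y₀ + ε') - F y₀)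
    have h1 : F (y₀ - ε') < F (VaR s) := by rw [hFs]; linarith [hdist.2]
    have h2 : F (VaR s) < F (y₀ + ε') := by rw [hFs]; linarith [hdist.1]
    have h3 : y₀ - ε' < VaR s := by
      by_contra h
      push_neg at h
      exact absurd (hFmono' h) (not_le.mpr h1)
    have h4 : VaR s < y₀ + ε' := by
      by_contra h
      push_neg at h
      exact absurd (hFmono' h) (not_le.mpr h2)
    rw [Real.dist_eq, abs_lt]
    constructor <;> linarith
  -- sequence of lower endpoints
  set A : ℕ → ℝ := fun n => 1 - F (v + n) with hAdef
  have hApos : ∀ n, 0 < A n := fun n => by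
    simp only [hAdef]; linarith [hFlt1 (v + n)]
  have hAle : ∀ n, A n ≤ α := by
    intro n
    have h1 : F v ≤ F (v + n) := hFmono' (by have hn0 : (0:ℝ) ≤ (n:ℝ) := Nat.cast_nonneg n; linarith)
    simp only [hAdef]
    linarith [hv ▸ h1]
  -- change of variables
  have hsub : ∀ n : ℕ, (∫ s in (A n)..α, VaR s) = ∫ y in v..(v + (n:ℝ)), y * f y := by
    intro n
    have hvn : v ≤ v + (n:ℝ) := by have hn0 : (0:ℝ) ≤ (n:ℝ) := Nat.cast_nonneg n; linarith
    have hder : ∀ x ∈ uIcc v (v + (n:ℝ)), HasDerivAt (fun y => 1 - F y) (-f x) x :=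
      fun x _ => (hF x).const_sub 1
    have hcontd : ContinuousOn (fun y : ℝ => -f y) (uIcc v (v + (n:ℝ))) :=
      hfcont.neg.continuousOn
    have himg : ((fun y => 1 - F y) '' uIcc v (v + (n:ℝ))) ⊆ Ioo (0:ℝ) 1 := by
      rintro _ ⟨y, hy, rfl⟩
      rw [uIcc_of_le hvn] at hy
      have hy0 : 0 < y := lt_of_lt_of_le hv0 hy.1
      exact ⟨show (0:ℝ) < 1 - F y by linarith [hFlt1 y],
        show (1:ℝ) - F y < 1 by linarith [hFpos y hy0]⟩
    have hcv := integral_comp_smul_deriv' hder hcontd (hVaRcont.mono himg)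
    have hL : EqOn (fun x => (-f x) • ((VaR ∘ (fun y => 1 - F y)) x))
        (fun x => -(x * f x)) (uIcc v (v + (n:ℝ))) := by
      intro x hx
      rw [uIcc_of_le hvn] at hx
      have hVx : VaR (1 - F x) = x := hVaReq x (lt_of_lt_of_le hv0 hx.1)
      simp only [Function.comp, hVx, smul_eq_mul]
      ring
    rw [intervalIntegral.integral_congr hL, intervalIntegral.integral_neg] at hcv
    have hFv : 1 - F v = α := by rw [hv]; ring
    rw [hFv] at hcv
    have h2 : A n = 1 - F (v + (n:ℝ)) := rfl
    rw [← h2, intervalIntegral.integral_symm (A n) α] at hcv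
    linarith [hcv]
  -- properties of A
  have hAanti : Antitone A := by
    intro m n h
    have h1 : F (v + m) ≤ F (v + n) := hFmono' (by
      have : (m:ℝ) ≤ (n:ℝ) := Nat.cast_le.mpr h
      linarith)
    simp only [hAdef]
    linarith
  have hAtend : Filter.Tendsto A Filter.atTop (nhds 0) := by
    have h1 : Filter.Tendsto (fun n : ℕ => v + (n:ℝ)) Filter.atTop Filter.atTop :=
      Filter.tendsto_atTop_add_const_left _ v tendsto_natCast_atTop_atTop
    have h2 := (hFlim.comp h1).const_sub (1:ℝ)
    simpa using h2
  -- VaR is antitone on (0,1)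
  have hVaRanti : AntitoneOn VaR (Ioo (0:ℝ) 1) := by
    intro s hs t ht hst
    rcases eq_or_lt_of_le hst with rfl | h
    · exact le_rfl
    · have h1 : F (VaR t) < F (VaR s) := by
        rw [hVaR s hs, hVaR t ht]; linarith
      by_contra hc
      push_neg at hc
      exact absurd (hFmono' hc.le) (not_le.mpr h1)
  -- integrability of VaR near 0
  have hVaRii : ∀ n, IntegrableOn VaR (Ioc (A n) α) volume := by
    intro n
    have h1 : uIcc (A n) α ⊆ Ioo (0:ℝ) 1 := by
      rw [uIcc_of_le (hAle n)]
      intro x hx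
      exact ⟨lt_of_lt_of_le (hApos n) hx.1, lt_of_le_of_lt hx.2 hα1⟩
    have h2 : AntitoneOn VaR (uIcc (A n) α) := hVaRanti.mono h1
    have h3 := h2.intervalIntegrable (μ := volume)
    rwa [intervalIntegrable_iff_integrableOn_Ioc_of_le (hAle n)] at h3
  have hVaRnn' : ∀ x ∈ Ioc (0:ℝ) α, 0 ≤ VaR x := fun x hx =>
    (hVaRpos x ⟨hx.1, lt_of_le_of_lt hx.2 hα1⟩).le
  have hyfnn_v : (0:ℝ → ℝ) ≤ᵐ[volume.restrict (Ioi v)] fun y => y * f y := by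
    apply (ae_restrict_iff' measurableSet_Ioi).2 (ae_of_all _ _)
    intro y hy
    have h1 : (0:ℝ) < y := lt_trans hv0 hy
    have := hfnn y
    positivity
  have hbd : ∀ n, (∫ x in Ioc (A n) α, ‖VaR x‖) ≤ ∫ y in Ioi v, y * f y := by
    intro n
    have h1 : ∀ x ∈ Ioc (A n) α, ‖VaR x‖ = VaR x := fun x hx =>
      Real.norm_of_nonneg (hVaRnn' x ⟨lt_of_lt_of_le (hApos n) hx.1.le, hx.2⟩)
    rw [setIntegral_congr_fun measurableSet_Ioc h1]
    rw [← intervalIntegral.integral_of_le (hAle n), hsub n]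
    have hvn : v ≤ v + (n:ℝ) := by have hn0 : (0:ℝ) ≤ (n:ℝ) := Nat.cast_nonneg n; linarith
    rw [intervalIntegral.integral_of_le hvn]
    exact setIntegral_mono_set hyf_int_v hyfnn_v
      (HasSubset.Subset.eventuallyLE Ioc_subset_Ioi_self)
  have hVaRint : IntegrableOn VaR (Ioc (0:ℝ) α) volume :=
    integrableOn_Ioc_of_intervalIntegral_norm_bounded_left hVaRii hAtend
      (Filter.Eventually.of_forall hbd)
  -- the key identity: ∫₀^α VaR = ∫_{Ioi v} y f y
  have hkey : (∫ s in (0:ℝ)..α, VaR s) = ∫ y in Ioi v, y * f y := by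
    have hmono : Monotone (fun n => Ioc (A n) α) := fun m n h =>
      Ioc_subset_Ioc_left (hAanti h)
    have hunion : (⋃ n, Ioc (A n) α) = Ioc (0:ℝ) α := by
      apply Subset.antisymm
      · exact iUnion_subset fun n => Ioc_subset_Ioc_left (hApos n).le
      · intro x hx
        obtain ⟨n, hn⟩ := (hAtend.eventually_lt_const hx.1).exists
        exact mem_iUnion.mpr ⟨n, ⟨hn, hx.2⟩⟩
    have hlim1 := tendsto_setIntegral_of_monotone (fun n : ℕ => measurableSet_Ioc)
      hmono (hunion ▸ hVaRint)
    rw [hunion] at hlim1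
    have hlim2 : Filter.Tendsto (fun n : ℕ => ∫ y in v..(v + (n:ℝ)), y * f y)
        Filter.atTop (nhds (∫ y in Ioi v, y * f y)) :=
      intervalIntegral_tendsto_integral_Ioi v hyf_int_v
        (Filter.tendsto_atTop_add_const_left _ v tendsto_natCast_atTop_atTop)
    have heqn : (fun n : ℕ => ∫ x in Ioc (A n) α, VaR x) =
        fun n : ℕ => ∫ y in v..(v + (n:ℝ)), y * f y := by
      funext n
      rw [← intervalIntegral.integral_of_le (hAle n), hsub n]
    rw [heqn] at hlim1
    rw [intervalIntegral.integral_of_le hα0.le]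
    exact tendsto_nhds_unique hlim1 hlim2
  have hαES : α * ES = ∫ y in Ioi v, y * f y := by
    rw [hES, ← hkey]
    field_simp
  have hEY' : EY = (∫ y in (0:ℝ)..v, y * f y) + ∫ y in Ioi v, y * f y := by
    rw [hEY, ← Ioc_union_Ioi_eq_Ioi hv0.le,
      setIntegral_union (Ioc_disjoint_Ioi le_rfl) measurableSet_Ioi
        hyfc.integrableOn_Ioc hyf_int_v,
      intervalIntegral.integral_of_le hv0.le]
  -- T₁ rewriting
  have hT1 : ∀ a : ℝ, (∫ y in a..v, (y - a) * f y)
      = (∫ y in a..v, y * f y) - a * (F v - F a) := by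
    intro a
    have h1 : EqOn (fun y => (y - a) * f y) (fun y => y * f y - a * f y) (uIcc a v) :=
      fun y _ => by ring
    rw [intervalIntegral.integral_congr h1,
      intervalIntegral.integral_sub (hyfc.intervalIntegrable a v)
        ((hfInt a v).const_mul a),
      intervalIntegral.integral_const_mul, hFTC]
  have hH₂' : H₂ = fun a => (1 + θ) * a
      + ((∫ y in a..v, y * f y) - a * (F v - F a)) + (v - a) * (1 - F v)
      + κ / 2 * ((∫ y in (0:ℝ)..v, max (y - a) 0 ^ 2 * f y)
        + (v - a) ^ 2 * (1 - F v)) := by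
    funext a
    rw [hH₂ a, hT1 a]
  -- derivative of a ↦ ∫_a^v y f y
  have hP2a : ∀ a : ℝ, HasDerivAt (fun a => ∫ y in a..v, y * f y) (-(a * f a)) a := by
    intro a
    exact intervalIntegral.integral_hasDerivAt_left (hyfc.intervalIntegrable a v)
      (hyfc.stronglyMeasurableAtFilter volume (nhds a)) hyfc.continuousAt
  -- derivative of the parametric max integral
  have hP4 : ∀ a : ℝ, HasDerivAt (fun a => ∫ y in (0:ℝ)..v, max (y - a) 0 ^ 2 * f y)
      (∫ y in (0:ℝ)..v, 2 * max (y - a) 0 * (-1) * f y) a := by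
    intro a
    have hcF : ∀ x : ℝ, Continuous fun t : ℝ => max (t - x) 0 ^ 2 * f t := fun x =>
      (((continuous_id.sub continuous_const).max continuous_const).pow 2).mul hfcont
    have hcF' : ∀ x : ℝ, Continuous fun t : ℝ => 2 * max (t - x) 0 * (-1) * f t := fun x =>
      ((continuous_const.mul
        ((continuous_id.sub continuous_const).max continuous_const)).mul
          continuous_const).mul hfcont
    have hbound : ∀ᵐ t ∂volume, t ∈ uIoc (0:ℝ) v → ∀ x ∈ Metric.ball a 1,
        ‖2 * max (t - x) 0 * (-1) * f t‖ ≤ 2 * (|v| + |a| + 1) * f t := by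
      apply ae_of_all
      intro t ht x hx
      have ht2 : t ≤ max 0 v := ht.2
      have htv : t ≤ |v| := le_trans ht2 (max_le (abs_nonneg v) (le_abs_self v))
      have hxa : |x| ≤ |a| + 1 := by
        have h1 : |x - a| < 1 := by
          have := mem_ball_iff_norm.mp hx
          rwa [Real.norm_eq_abs] at this
        have h2 := abs_sub_abs_le_abs_sub x a
        linarith
      have hm0 : (0:ℝ) ≤ max (t - x) 0 := le_max_right _ _
      have hmle : max (t - x) 0 ≤ |v| + |a| + 1 := by
        apply max_le
        · have := neg_abs_le x
          linarith
        · positivity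
      have hnorm : ‖2 * max (t - x) 0 * (-1) * f t‖ = 2 * max (t - x) 0 * f t := by
        rw [Real.norm_eq_abs]
        have heq : 2 * max (t - x) 0 * (-1) * f t = -(2 * max (t - x) 0 * f t) := by ring
        rw [heq, abs_neg, abs_of_nonneg (mul_nonneg (by positivity) (hfnn t))]
      rw [hnorm]
      have hft := hfnn t
      nlinarith
    have hdiff : ∀ᵐ t ∂volume, t ∈ uIoc (0:ℝ) v → ∀ x ∈ Metric.ball a 1,
        HasDerivAt (fun x => max (t - x) 0 ^ 2 * f t) (2 * max (t - x) 0 * (-1) * f t) x := by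
      apply ae_of_all
      intro t _ x _
      have hinner : HasDerivAt (fun x : ℝ => t - x) (-1) x := (hasDerivAt_id x).const_sub t
      have hcomp := (hasDerivAt_max_sq (t - x)).comp x hinner
      have := hcomp.mul_const (f t)
      simpa [Function.comp] using this
    exact (intervalIntegral.hasDerivAt_integral_of_dominated_loc_of_deriv_le (Metric.ball_mem_nhds a one_pos)
      (Filter.Eventually.of_forall fun x => (hcF x).aestronglyMeasurable)
      ((hcF a).intervalIntegrable 0 v)
      (hcF' a).aestronglyMeasurable
      hbound
      ((continuous_const.mul hfcont).intervalIntegrable 0 v)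
      hdiff).2
  -- the main derivative statement
  have hderivH : ∀ a ∈ Icc (0:ℝ) v, HasDerivAt H₂ (D a) a := by
    rintro a ⟨ha0, hav⟩
    have P1 : HasDerivAt (fun a : ℝ => (1 + θ) * a) ((1 + θ) * 1) a :=
      (hasDerivAt_id a).const_mul (1 + θ)
    have P2b : HasDerivAt (fun a : ℝ => a * (F v - F a)) (1 * (F v - F a) + a * (-f a)) a :=
      (hasDerivAt_id a).mul ((hF a).const_sub (F v))
    have P3 : HasDerivAt (fun a : ℝ => (v - a) * (1 - F v)) ((-1) * (1 - F v)) a :=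
      ((hasDerivAt_id a).const_sub v).mul_const (1 - F v)
    have P5 : HasDerivAt (fun a : ℝ => (v - a) ^ 2 * (1 - F v))
        (((2:ℕ) * (v - a) ^ (2-1) * (-1)) * (1 - F v)) a :=
      (((hasDerivAt_id a).const_sub v).pow 2).mul_const (1 - F v)
    have total : HasDerivAt H₂
        ((1 + θ) * 1 + ((-(a * f a)) - (1 * (F v - F a) + a * (-f a))) + (-1) * (1 - F v)
          + κ / 2 * ((∫ y in (0:ℝ)..v, 2 * max (y - a) 0 * (-1) * f y)
            + ((2:ℕ) * (v - a) ^ (2-1) * (-1)) * (1 - F v))) a := by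
      rw [hH₂']
      exact ((P1.add ((hP2a a).sub P2b)).add P3).add
        (HasDerivAt.const_mul (κ / 2) ((hP4 a).add P5))
    have hmax_eq : (∫ y in (0:ℝ)..v, 2 * max (y - a) 0 * (-1) * f y)
        = -2 * ((∫ y in a..v, y * f y) - a * (F v - F a)) := by
      have hcg : Continuous fun y : ℝ => 2 * max (y - a) 0 * (-1) * f y :=
        ((continuous_const.mul
          ((continuous_id.sub continuous_const).max continuous_const)).mul
            continuous_const).mul hfcont
      rw [← intervalIntegral.integral_add_adjacent_intervals
        (hcg.intervalIntegrable 0 a) (hcg.intervalIntegrable a v)]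
      have hz : (∫ y in (0:ℝ)..a, 2 * max (y - a) 0 * (-1) * f y) = 0 := by
        have hEq : EqOn (fun y => 2 * max (y - a) 0 * (-1) * f y) (fun _ => (0:ℝ))
            (uIcc (0:ℝ) a) := by
          intro y hy
          rw [uIcc_of_le ha0] at hy
          have hmy : max (y - a) 0 = 0 := max_eq_right (by linarith [hy.2])
          simp [hmy]
        rw [intervalIntegral.integral_congr hEq, intervalIntegral.integral_zero]
      have h2 : (∫ y in a..v, 2 * max (y - a) 0 * (-1) * f y)
          = ∫ y in a..v, (-2) * ((y - a) * f y) := by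
        apply intervalIntegral.integral_congr
        intro y hy
        rw [uIcc_of_le hav] at hy
        have hmy : max (y - a) 0 = y - a := max_eq_left (by linarith [hy.1])
        show 2 * max (y - a) 0 * (-1) * f y = -2 * ((y - a) * f y)
        rw [hmy]; ring
      rw [hz, h2, zero_add, intervalIntegral.integral_const_mul, hT1 a]
    rw [hmax_eq] at total
    have hval : ((1 + θ) * 1 + ((-(a * f a)) - (1 * (F v - F a) + a * (-f a))) + (-1) * (1 - F v)
        + κ / 2 * ((-2 * ((∫ y in a..v, y * f y) - a * (F v - F a)))
          + ((2:ℕ) * (v - a) ^ (2-1) * (-1)) * (1 - F v))) = D a := by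
      rw [hD a, hv]
      push_cast
      ring
    rwa [hval] at total
  -- derivative of D and strict monotonicity
  have hDderiv : ∀ a : ℝ, HasDerivAt D (f a + κ * (1 - F a)) a := by
    intro a
    have hDfun : D = fun a => θ + F a
        + κ * (a * (1 - F a) - α * v - ∫ y in a..v, y * f y) := funext hD
    rw [hDfun]
    have h1 : HasDerivAt (fun a : ℝ => θ + F a) (f a) a := (hF a).const_add θ
    have h2 : HasDerivAt (fun a : ℝ => a * (1 - F a)) (1 * (1 - F a) + a * (-f a)) a :=
      (hasDerivAt_id a).mul ((hF a).const_sub 1)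
    have h3 := (h2.sub_const (α * v)).sub (hP2a a)
    have h4 := h1.add (HasDerivAt.const_mul κ h3)
    have hval : f a + κ * (1 - F a)
        = f a + κ * ((1 * (1 - F a) + a * (-f a)) - (-(a * f a))) := by ring
    rw [hval]
    exact h4
  have hDcont : ContinuousOn D (Icc (0:ℝ) v) :=
    fun x _ => (hDderiv x).continuousAt.continuousWithinAt
  have hDsm : StrictMono D := by
    apply strictMono_of_deriv_pos
    intro x
    rw [(hDderiv x).deriv]
    have h1 := hfnn x
    have h2 := hFlt1 x
    nlinarith
  have hDmono : StrictMonoOn D (Icc (0:ℝ) v) := hDsm.strictMonoOn _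
  have hDv : 0 < D v := by
    rw [hD v, intervalIntegral.integral_same, hv]
    ring_nf
    nlinarith
  -- value of D at 0 and the threshold condition
  have hcond : κ * (EY + α * v - α * ES)
      = κ * (α * v + ∫ y in (0:ℝ)..v, y * f y) := by
    rw [hEY', ← hαES]
    ring
  have hD0 : D 0 = θ - κ * (α * v + ∫ y in (0:ℝ)..v, y * f y) := by
    rw [hD 0, hF0]
    ring
  refine ⟨hderivH, hDmono, hDv, ?_, ?_⟩
  · -- boundary minimum case
    intro hge a ha
    rw [hcond] at hge
    have hD0nn : 0 ≤ D 0 := by rw [hD0]; linarith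
    have hmono : MonotoneOn H₂ (Icc (0:ℝ) v) := by
      refine monotoneOn_of_deriv_nonneg (convex_Icc 0 v) ?_ ?_ ?_
      · exact fun x hx => (hderivH x hx).continuousAt.continuousWithinAt
      · intro x hx
        rw [interior_Icc] at hx
        exact ((hderivH x ⟨hx.1.le, hx.2.le⟩).differentiableAt).differentiableWithinAt
      · intro x hx
        rw [interior_Icc] at hx
        rw [(hderivH x ⟨hx.1.le, hx.2.le⟩).deriv]
        have h1 : D 0 < D x := hDsm hx.1
        linarith
    exact hmono (left_mem_Icc.mpr hv0.le) ha ha.1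
  · -- interior minimum case
    intro hlt
    rw [hcond] at hlt
    have hD0neg : D 0 < 0 := by rw [hD0]; linarith
    have h0mem : (0:ℝ) ∈ Ioo (D 0) (D v) := ⟨hD0neg, hDv⟩
    obtain ⟨astar, hastar, hDval⟩ := intermediate_value_Ioo hv0.le hDcont h0mem
    refine ⟨astar, hastar, hDval, ?_, ?_⟩
    · intro a ha
      rcases le_total a astar with hle | hle
      · have hanti : AntitoneOn H₂ (Icc (0:ℝ) astar) := by
          refine antitoneOn_of_deriv_nonpos (convex_Icc 0 astar) ?_ ?_ ?_
          · exact fun x hx =>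
              (hderivH x ⟨hx.1, hx.2.trans hastar.2.le⟩).continuousAt.continuousWithinAt
          · intro x hx
            rw [interior_Icc] at hx
            exact ((hderivH x ⟨hx.1.le, (hx.2.trans hastar.2).le⟩).differentiableAt).differentiableWithinAt
          · intro x hx
            rw [interior_Icc] at hx
            rw [(hderivH x ⟨hx.1.le, (hx.2.trans hastar.2).le⟩).deriv]
            have h1 : D x < D astar := hDsm hx.2
            rw [hDval] at h1
            linarith
        exact hanti ⟨ha.1, hle⟩ ⟨hastar.1.le, le_rfl⟩ hle
      · have hmono2 : MonotoneOn H₂ (Icc astar v) := by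
          refine monotoneOn_of_deriv_nonneg (convex_Icc astar v) ?_ ?_ ?_
          · exact fun x hx =>
              (hderivH x ⟨hastar.1.le.trans hx.1, hx.2⟩).continuousAt.continuousWithinAt
          · intro x hx
            rw [interior_Icc] at hx
            exact ((hderivH x ⟨(hastar.1.trans hx.1).le, hx.2.le⟩).differentiableAt).differentiableWithinAt
          · intro x hx
            rw [interior_Icc] at hx
            rw [(hderivH x ⟨(hastar.1.trans hx.1).le, hx.2.le⟩).deriv]
            have h1 : D astar < D x := hDsm hx.1
            rw [hDval] at h1
            linarith
        exact hmono2 ⟨le_rfl, hastar.2.le⟩ ⟨hle, ha.2⟩ hle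
    · intro a _ hDa
      exact hDsm.injective (hDa.trans hDval.symm)
end

section
/- Let Y be exponentially distributed with mean θ₁ under P and mean θ₂ under Q, where 0 < θ₁ < θ₂ and θ < κθ₁ for κ > 0, θ > 0. Define H₄(d) = (1+θ)(∫₀^d y dF^Q(y) + d e^{−d/θ₂}) + ∫_d^∞ e^{−y/θ₁} dy + κ∫_d^∞ (y−d)e^{−y/θ₁} dy. Then H₄'(d) = (1+θ)e^{−d/θ₂} − (1+κθ₁)e^{−d/θ₁}, and H₄ is uniquely minimized over [0,∞) at d* = (θ₁θ₂/(θ₂−θ₁))·ln((1+κθ₁)/(1+θ)) > 0. If instead θ ≥ κθ₁, then H₄'(d) ≥ 0 for all d ≥ 0 and the minimizer is d* = 0. -/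
open MeasureTheory intervalIntegral Set Real Filter Topology

private lemma exp_deriv_aux {a : ℝ} (ha : 0 < a) (y : ℝ) :
    HasDerivAt (fun y : ℝ => exp (-y / a)) (exp (-y / a) * (-1 / a)) y := by
  have h1 : HasDerivAt (fun y : ℝ => -y / a) (-1 / a) y :=
    ((hasDerivAt_id y).neg).div_const a
  exact (Real.hasDerivAt_exp _).comp y h1

private lemma tendsto_aux {a : ℝ} (ha : 0 < a) (b : ℝ) :
    Tendsto (fun y : ℝ => (y + b) * exp (-y / a)) atTop (𝓝 0) := by
  have h1 : Tendsto (fun x : ℝ => a * (x ^ 1 * exp (-x)) + b * exp (-x)) atTop (𝓝 0) := by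
    have := ((tendsto_pow_mul_exp_neg_atTop_nhds_zero 1).const_mul a).add
      (tendsto_exp_neg_atTop_nhds_zero.const_mul b)
    simpa using this
  have h2 : Tendsto (fun y : ℝ => y / a) atTop atTop :=
    Tendsto.atTop_div_const ha tendsto_id
  have h3 := h1.comp h2
  refine h3.congr fun y => ?_
  have : -(y / a) = -y / a := (neg_div a y).symm
  simp only [Function.comp_apply, pow_one, this]
  field_simp

/-- Exponential claims with heterogeneous beliefs, limited-loss strategy
`I(y) = y ∧ d`: the objective `H₄` has derivative
`H₄'(d) = (1+θ)e^{−d/θ₂} − (1+κθ₁)e^{−d/θ₁}`; if `θ < κθ₁` it is uniquely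
minimized at `d* = (θ₁θ₂/(θ₂−θ₁))·ln((1+κθ₁)/(1+θ)) > 0`, and if `θ ≥ κθ₁`
the derivative is nonnegative and the minimizer is `d* = 0`. -/
theorem exponential_limited_loss_minimizer
    (θ₁ θ₂ θ κ : ℝ) (h₁ : 0 < θ₁) (h₁₂ : θ₁ < θ₂) (hθ : 0 < θ) (hκ : 0 < κ)
    (H₄ : ℝ → ℝ)
    (hH₄ : ∀ d : ℝ, H₄ d =
      (1 + θ) * ((∫ y in (0 : ℝ)..d, y * ((1 / θ₂) * exp (-y / θ₂))) +
          d * exp (-d / θ₂)) +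
        (∫ y in Ioi d, exp (-y / θ₁)) +
        κ * ∫ y in Ioi d, (y - d) * exp (-y / θ₁)) :
    (∀ d : ℝ, 0 ≤ d →
      HasDerivAt H₄ ((1 + θ) * exp (-d / θ₂) - (1 + κ * θ₁) * exp (-d / θ₁)) d) ∧
      (θ < κ * θ₁ →
        0 < (θ₁ * θ₂ / (θ₂ - θ₁)) * log ((1 + κ * θ₁) / (1 + θ)) ∧
        ∀ d : ℝ, 0 ≤ d → d ≠ (θ₁ * θ₂ / (θ₂ - θ₁)) * log ((1 + κ * θ₁) / (1 + θ)) →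
          H₄ ((θ₁ * θ₂ / (θ₂ - θ₁)) * log ((1 + κ * θ₁) / (1 + θ))) < H₄ d) ∧
      (θ ≥ κ * θ₁ →
        (∀ d : ℝ, 0 ≤ d →
          0 ≤ (1 + θ) * exp (-d / θ₂) - (1 + κ * θ₁) * exp (-d / θ₁)) ∧
        ∀ d : ℝ, 0 ≤ d → H₄ 0 ≤ H₄ d) := by
  have h₂ : 0 < θ₂ := h₁.trans h₁₂
  -- closed form for the three integrals
  have int1 : ∀ d : ℝ, (∫ y in (0 : ℝ)..d, y * ((1 / θ₂) * exp (-y / θ₂))) =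
      θ₂ - (d + θ₂) * exp (-d / θ₂) := by
    intro d
    have hG : ∀ y : ℝ, HasDerivAt (fun y : ℝ => -((y + θ₂) * exp (-y / θ₂)))
        (y * ((1 / θ₂) * exp (-y / θ₂))) y := by
      intro y
      have := (((hasDerivAt_id y).add_const θ₂).mul (exp_deriv_aux h₂ y)).neg
      refine this.congr_deriv ?_
      field_simp
      simp only [id]
      ring
    have hcont : Continuous (fun y : ℝ => y * ((1 / θ₂) * exp (-y / θ₂))) := by
      fun_prop
    rw [intervalIntegral.integral_eq_sub_of_hasDerivAt (fun y _ => hG y)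
      (hcont.intervalIntegrable 0 d)]
    simp [exp_zero]
    ring
  have int2 : ∀ d : ℝ, (∫ y in Ioi d, exp (-y / θ₁)) = θ₁ * exp (-d / θ₁) := by
    intro d
    have hG : ∀ y ∈ Ici d, HasDerivAt (fun y : ℝ => -θ₁ * exp (-y / θ₁))
        (exp (-y / θ₁)) y := by
      intro y _
      have := (exp_deriv_aux h₁ y).const_mul (-θ₁)
      refine this.congr_deriv ?_
      field_simp
    have htend : Tendsto (fun y : ℝ => -θ₁ * exp (-y / θ₁)) atTop (𝓝 0) := by
      have h2 : Tendsto (fun y : ℝ => y / θ₁) atTop atTop :=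
        Tendsto.atTop_div_const h₁ tendsto_id
      have := (tendsto_exp_neg_atTop_nhds_zero.comp h2).const_mul (-θ₁)
      simpa [Function.comp, neg_div] using this
    rw [MeasureTheory.integral_Ioi_of_hasDerivAt_of_nonneg' hG
      (fun y _ => (exp_pos _).le) htend]
    ring
  have int3 : ∀ d : ℝ, (∫ y in Ioi d, (y - d) * exp (-y / θ₁)) =
      θ₁ ^ 2 * exp (-d / θ₁) := by
    intro d
    have hG : ∀ y ∈ Ici d, HasDerivAt
        (fun y : ℝ => -(θ₁ * ((y + (θ₁ - d)) * exp (-y / θ₁))))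
        ((y - d) * exp (-y / θ₁)) y := by
      intro y _
      have h1 := (((hasDerivAt_id y).add_const (θ₁ - d)).mul (exp_deriv_aux h₁ y))
      have := (h1.const_mul θ₁).neg
      refine this.congr_deriv ?_
      field_simp
      simp only [id]
      ring
    have htend : Tendsto (fun y : ℝ => -(θ₁ * ((y + (θ₁ - d)) * exp (-y / θ₁))))
        atTop (𝓝 0) := by
      have := ((tendsto_aux h₁ (θ₁ - d)).const_mul θ₁).neg
      simpa using this
    have hnn : ∀ y ∈ Ioi d, 0 ≤ (y - d) * exp (-y / θ₁) := fun y hy =>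
      mul_nonneg (by simp at hy; linarith) (exp_pos _).le
    rw [MeasureTheory.integral_Ioi_of_hasDerivAt_of_nonneg' hG hnn htend]
    ring_nf
  -- closed form for H₄
  have hF : ∀ d : ℝ, H₄ d = (1 + θ) * θ₂ - (1 + θ) * θ₂ * exp (-d / θ₂) +
      (θ₁ + κ * θ₁ ^ 2) * exp (-d / θ₁) := by
    intro d
    rw [hH₄ d, int1 d, int2 d, int3 d]
    ring
  -- derivative at every point
  have hderiv : ∀ d : ℝ, HasDerivAt H₄
      ((1 + θ) * exp (-d / θ₂) - (1 + κ * θ₁) * exp (-d / θ₁)) d := by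
    intro d
    have hFe : H₄ = fun d => (1 + θ) * θ₂ - (1 + θ) * θ₂ * exp (-d / θ₂) +
        (θ₁ + κ * θ₁ ^ 2) * exp (-d / θ₁) := funext hF
    rw [hFe]
    have h1 := ((exp_deriv_aux h₂ d).const_mul ((1 + θ) * θ₂)).const_sub ((1 + θ) * θ₂)
    have h2 := (exp_deriv_aux h₁ d).const_mul (θ₁ + κ * θ₁ ^ 2)
    have := h1.add h2
    refine this.congr_deriv ?_
    field_simp
    ring
  have hcont : Continuous H₄ := by
    have : Differentiable ℝ H₄ := fun d => (hderiv d).differentiableAt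
    exact this.continuous
  have hderiv' : ∀ d : ℝ, deriv H₄ d =
      (1 + θ) * exp (-d / θ₂) - (1 + κ * θ₁) * exp (-d / θ₁) := fun d => (hderiv d).deriv
  have h1θ : (0:ℝ) < 1 + θ := by linarith
  have h1κ : (0:ℝ) < 1 + κ * θ₁ := by nlinarith
  have hsub : (0:ℝ) < θ₂ - θ₁ := by linarith
  set c : ℝ := (θ₁ * θ₂ / (θ₂ - θ₁)) * log ((1 + κ * θ₁) / (1 + θ)) with hc
  have hlogdiv : log ((1 + κ * θ₁) / (1 + θ)) = log (1 + κ * θ₁) - log (1 + θ) :=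
    log_div h1κ.ne' h1θ.ne'
  have hcmul : c * (θ₂ - θ₁) = (log (1 + κ * θ₁) - log (1 + θ)) * (θ₁ * θ₂) := by
    rw [hc, hlogdiv]; field_simp
  have hkey : ∀ d : ℝ, d / θ₁ - d / θ₂ = d * (θ₂ - θ₁) / (θ₁ * θ₂) := by
    intro d; field_simp
  have hθθ : (0:ℝ) < θ₁ * θ₂ := by positivity
  -- sign characterization
  have hlin : ∀ d : ℝ, ((1 + θ) * exp (-d / θ₂) < (1 + κ * θ₁) * exp (-d / θ₁) ↔ d < c) := by
    intro d
    have e1 : (1 + θ) * exp (-d / θ₂) = exp (log (1 + θ) + -(d / θ₂)) := by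
      rw [exp_add, exp_log h1θ, neg_div]
    have e2 : (1 + κ * θ₁) * exp (-d / θ₁) = exp (log (1 + κ * θ₁) + -(d / θ₁)) := by
      rw [exp_add, exp_log h1κ, neg_div]
    rw [e1, e2, exp_lt_exp]
    constructor
    · intro h
      have h2 : d * (θ₂ - θ₁) / (θ₁ * θ₂) < log (1 + κ * θ₁) - log (1 + θ) := by
        rw [← hkey d]; linarith
      rw [div_lt_iff₀ hθθ, ← hcmul] at h2
      exact lt_of_mul_lt_mul_right h2 hsub.le
    · intro h
      have h2 : d * (θ₂ - θ₁) < c * (θ₂ - θ₁) := mul_lt_mul_of_pos_right h hsub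
      rw [hcmul, ← div_lt_iff₀ hθθ, ← hkey d] at h2
      linarith
  have hlin' : ∀ d : ℝ, ((1 + κ * θ₁) * exp (-d / θ₁) < (1 + θ) * exp (-d / θ₂) ↔ c < d) := by
    intro d
    have e1 : (1 + θ) * exp (-d / θ₂) = exp (log (1 + θ) + -(d / θ₂)) := by
      rw [exp_add, exp_log h1θ, neg_div]
    have e2 : (1 + κ * θ₁) * exp (-d / θ₁) = exp (log (1 + κ * θ₁) + -(d / θ₁)) := by
      rw [exp_add, exp_log h1κ, neg_div]
    rw [e1, e2, exp_lt_exp]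
    constructor
    · intro h
      have h2 : log (1 + κ * θ₁) - log (1 + θ) < d * (θ₂ - θ₁) / (θ₁ * θ₂) := by
        rw [← hkey d]; linarith
      rw [lt_div_iff₀ hθθ, ← hcmul] at h2
      exact lt_of_mul_lt_mul_right h2 hsub.le
    · intro h
      have h2 : c * (θ₂ - θ₁) < d * (θ₂ - θ₁) := mul_lt_mul_of_pos_right h hsub
      rw [hcmul, ← lt_div_iff₀ hθθ, ← hkey d] at h2
      linarith
  refine ⟨fun d _ => hderiv d, ?_, ?_⟩
  · -- case θ < κ θ₁
    intro hcase
    have hL : 0 < log ((1 + κ * θ₁) / (1 + θ)) := by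
      apply log_pos
      rw [lt_div_iff₀ h1θ]
      nlinarith
    have hcpos : 0 < c := by
      apply mul_pos _ hL
      positivity
    refine ⟨hcpos, ?_⟩
    intro d hd hne
    have hanti : StrictAntiOn H₄ (Iic c) := by
      apply strictAntiOn_of_deriv_neg (convex_Iic c) hcont.continuousOn
      intro x hx
      rw [interior_Iic] at hx
      rw [hderiv' x]
      have := (hlin x).mpr hx
      linarith
    have hmono : StrictMonoOn H₄ (Ici c) := by
      apply strictMonoOn_of_deriv_pos (convex_Ici c) hcont.continuousOn
      intro x hx
      rw [interior_Ici] at hx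
      rw [hderiv' x]
      have := (hlin' x).mpr hx
      linarith
    rcases lt_or_gt_of_ne hne with h | h
    · exact hanti h.le (le_refl c) h
    · exact hmono (le_refl c) h.le h
  · -- case θ ≥ κ θ₁
    intro hcase
    have hnn : ∀ d : ℝ, 0 ≤ d →
        0 ≤ (1 + θ) * exp (-d / θ₂) - (1 + κ * θ₁) * exp (-d / θ₁) := by
      intro d hd
      have hee : exp (-d / θ₁) ≤ exp (-d / θ₂) := by
        apply exp_le_exp.mpr
        rw [neg_div, neg_div, neg_le_neg_iff]
        apply div_le_div_of_nonneg_left hd h₁ h₁₂.le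
      nlinarith [exp_pos (-d / θ₂), exp_pos (-d / θ₁)]
    refine ⟨hnn, ?_⟩
    intro d hd
    have hmono : MonotoneOn H₄ (Ici 0) := by
      apply monotoneOn_of_deriv_nonneg (convex_Ici 0) hcont.continuousOn
      · exact fun x _ => ((hderiv x).differentiableAt).differentiableWithinAt
      · intro x hx
        rw [interior_Ici] at hx
        rw [hderiv' x]
        exact hnn x hx.le
    exact hmono (self_mem_Ici) hd hd
end
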